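/- arXiv:0811.3342 — 2 statements merged into one kernel-verified Lean document; each statement's English description precedes it below -/
import Mathlib

section
/- Let M(t) = 1 + Σ m_i t^i and R(t) = 1 + Σ r_i t^i be formal power series with M(t) = R(tM(t)). Then the coefficients satisfy Speicher's free moment-cumulant relation: m_n = Σ over noncrossing partitions π of {1,…,n} of ∏_{B ∈ π} r_{|B|}. -/
open Finset Nat PowerSeries
open scoped Classical

/-- Composition `R(f)` of formal power series, valid when `f` has zero constant term. -/
noncomputable def psComp (R f : PowerSeries ℚ) : PowerSeries ℚ :=
  PowerSeries.mk fun n => ∑ k ∈ Finset.range (n + 1), coeff k R * coeff n (f ^ k)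

/-- A set partition `π` of `{1,…,n}` is noncrossing if there are no `i < j < k < l`
with `i, k` in one block and `j, l` in a different block. -/
def Noncrossing {n : ℕ} (π : Finpartition (Finset.univ : Finset (Fin n))) : Prop :=
  ∀ B₁ ∈ π.parts, ∀ B₂ ∈ π.parts, ∀ i j k l : Fin n,
    i < j → j < k → k < l → i ∈ B₁ → k ∈ B₁ → j ∈ B₂ → l ∈ B₂ → B₁ = B₂

/-!
Write `S k` for the sum over noncrossing partitions of `{0, …, k - 1}`. In a noncrossing
partition of `{0, …, n}`, let `b` be the largest element of the part of `0`: every other part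
lies entirely below or entirely above `b`, so the partition is glued from a noncrossing partition
of `{0, …, b - 1}`, with `b` added to the part of `0`, and one of `{b + 1, …, n}`. To iterate
this, the part of `0` carries a shift `j`, weighing a part `B` by `r (|B| + j)`; the marked sums
`V j k` then satisfy `V j (n + 1) = ∑ b, V (j + 1) b * S (n - b)`. This is the coefficient
recursion of `R_j(t S(t))` with `R_j(t) = ∑ k, r (j + k) t ^ k = r j + t R_{j + 1}(t)`, hence
`S = R(t S)`. A solution of `M = R(t M)` is determined coefficient by coefficient, so `M = S`.
-/
namespace Finpartition

variable {α β : Type*}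

section Constructions

variable [DecidableEq α] [DecidableEq β] {s t : Finset α}

theorem eq_of_parts_subset {P Q : Finpartition s} (h : P.parts ⊆ Q.parts) : P = Q := by
  ext C
  refine ⟨fun hC => h hC, fun hC => ?_⟩
  obtain ⟨x, hx⟩ := Q.nonempty_of_mem_parts hC
  obtain ⟨B, hB, hxB⟩ := P.exists_mem (Q.le hC hx)
  rwa [Q.eq_of_mem_parts hC (h hB) hx hxB]

theorem part_mem_parts_of_mem {P : Finpartition s} {x y : α} (hy : y ∈ P.part x) :
    P.part x ∈ P.parts :=
  P.part_mem.2 (P.part_nonempty.1 ⟨y, hy⟩)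

theorem disjoint_part_of_ne {P : Finpartition s} {B : Finset α} (hB : B ∈ P.parts) {x : α}
    (hne : B ≠ P.part x) : Disjoint (P.part x) B := by
  by_cases hx : x ∈ s
  · exact P.disjoint (P.part_mem.2 hx) hB hne.symm
  · simp [P.part_eq_empty.2 hx]

theorem mem_restrict_parts {P : Finpartition s} (ht : t ⊆ s) {A : Finset α} :
    A ∈ (P.restrict ht).parts ↔ A ≠ ∅ ∧ ∃ B ∈ P.parts, B ∩ t = A := by
  simp [restrict, and_comm]

theorem part_restrict {P : Finpartition s} (ht : t ⊆ s) {x : α} (hx : x ∈ t) :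
    (P.restrict ht).part x = P.part x ∩ t :=
  have hx' : x ∈ P.part x ∩ t := mem_inter.2 ⟨P.mem_part (ht hx), hx⟩
  part_eq_of_mem _ ((mem_restrict_parts ht).2 ⟨ne_empty_of_mem hx', _, P.part_mem.2 (ht hx), rfl⟩)
    hx'

def disjUnion (P : Finpartition s) (Q : Finpartition t) (h : Disjoint s t) :
    Finpartition (s ∪ t) where
  parts := P.parts ∪ Q.parts
  supIndep := by
    rw [Finset.supIndep_iff_pairwiseDisjoint, coe_union, Set.pairwiseDisjoint_union]
    exact ⟨P.disjoint, Q.disjoint, fun _ hB _ hC _ => h.mono (P.le hB) (Q.le hC)⟩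
  sup_parts := by rw [sup_union, P.sup_parts, Q.sup_parts]; rfl
  bot_notMem := by simp

theorem disjoint_parts (P : Finpartition s) (Q : Finpartition t) (h : Disjoint s t) :
    Disjoint P.parts Q.parts :=
  Finset.disjoint_left.2 fun _ hP hQ =>
    P.ne_bot hP (disjoint_self.1 (h.mono (P.le hP) (Q.le hQ)))

-- If `x ∉ s`, then `P.part x = ∅` and `a` becomes a part of its own.
def insertPart (P : Finpartition s) {a : α} (ha : a ∉ s) (x : α) :
    Finpartition (insert a s) where
  parts := insert (insert a (P.part x)) (P.parts.erase (P.part x))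
  supIndep := by
    rw [Finset.supIndep_iff_pairwiseDisjoint, coe_insert]
    refine (P.disjoint.subset (by simp)).insert fun B hB _ => ?_
    rw [mem_coe, Finset.mem_erase] at hB
    exact Finset.disjoint_insert_left.2
      ⟨fun haB => ha (P.le hB.2 haB), disjoint_part_of_ne hB.2 hB.1⟩
  sup_parts := by
    ext y
    simp only [sup_insert, id_eq, Finset.sup_eq_biUnion, sup_eq_union, mem_union, mem_insert,
      mem_biUnion, Finset.mem_erase]
    constructor
    · rintro ((rfl | hy) | ⟨B, ⟨-, hB⟩, hy⟩)
      exacts [Or.inl rfl, Or.inr (P.part_subset x hy), Or.inr (P.le hB hy)]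
    · rintro (rfl | hy)
      · exact Or.inl (Or.inl rfl)
      obtain ⟨B, hB, hyB⟩ := P.exists_mem hy
      by_cases hBx : B = P.part x
      · exact Or.inl (Or.inr (hBx ▸ hyB))
      · exact Or.inr ⟨B, ⟨hBx, hB⟩, hyB⟩
  bot_notMem := by simp [(insert_ne_empty _ _).symm]

def mapEmb (f : α ↪ β) (P : Finpartition s) : Finpartition (s.map f) where
  parts := P.parts.image (Finset.map f)
  supIndep := by
    rw [supIndep_iff_pairwiseDisjoint, coe_image]
    rintro _ ⟨B, hB, rfl⟩ _ ⟨C, hC, rfl⟩ hne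
    exact (disjoint_map f).2 (P.disjoint hB hC fun h => hne (by rw [h]))
  sup_parts := by
    ext y
    simp only [sup_image, Finset.sup_eq_biUnion, mem_biUnion, Function.comp_apply, id_eq, mem_map]
    constructor
    · rintro ⟨B, hB, x, hx, rfl⟩
      exact ⟨x, P.le hB hx, rfl⟩
    · rintro ⟨x, hx, rfl⟩
      obtain ⟨B, hB, hxB⟩ := P.exists_mem hx
      exact ⟨B, hB, x, hxB, rfl⟩
  bot_notMem := by
    simp only [bot_eq_empty, mem_image, map_eq_empty, not_exists, not_and]
    rintro B hB rfl
    exact P.bot_notMem hB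

noncomputable def comapEmb (f : α ↪ β) (Q : Finpartition (s.map f)) : Finpartition s where
  parts := Q.parts.image fun B => B.preimage f f.injective.injOn
  supIndep := by
    rw [supIndep_iff_pairwiseDisjoint, coe_image]
    rintro _ ⟨B, hB, rfl⟩ _ ⟨C, hC, rfl⟩ hne
    exact disjoint_preimage (hs := f.injective.injOn) (ht := f.injective.injOn)
      (Q.disjoint hB hC fun h => hne (by rw [h]))
  sup_parts := by
    ext x
    simp only [sup_image, Finset.sup_eq_biUnion, mem_biUnion, Function.comp_apply, id_eq,
      mem_preimage]
    constructor
    · rintro ⟨B, hB, hx⟩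
      exact (mem_map' f).1 (Q.le hB hx)
    · intro hx
      exact Q.exists_mem (mem_map_of_mem f hx)
  bot_notMem := by
    simp only [bot_eq_empty, mem_image, not_exists, not_and]
    intro B hB hempty
    obtain ⟨y, hy⟩ := Q.nonempty_of_mem_parts hB
    obtain ⟨x, -, rfl⟩ := mem_map.1 (Q.le hB hy)
    have hx : x ∈ B.preimage f f.injective.injOn := mem_preimage.2 hy
    simp [hempty] at hx

noncomputable def mapEmbEquiv (f : α ↪ β) (s : Finset α) :
    Finpartition s ≃ Finpartition (s.map f) where
  toFun := mapEmb f
  invFun := comapEmb f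
  left_inv P := by
    ext1
    simp only [comapEmb, mapEmb, image_image]
    exact (image_congr fun B _ => preimage_map f B).trans image_id
  right_inv Q := eq_of_parts_subset fun A hA => by
    simp only [comapEmb, mapEmb, image_image, mem_image, Function.comp_apply] at hA
    obtain ⟨B, hB, rfl⟩ := hA
    obtain ⟨u, -, rfl⟩ := subset_map_iff.1 (Q.le hB)
    rwa [preimage_map]

end Constructions

section Noncrossing

variable [Preorder α] [DecidableEq α] {s t : Finset α}

def IsNoncrossing (P : Finpartition s) : Prop :=
  ∀ B₁ ∈ P.parts, ∀ B₂ ∈ P.parts, ∀ i j k l : α,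
    i < j → j < k → k < l → i ∈ B₁ → k ∈ B₁ → j ∈ B₂ → l ∈ B₂ → B₁ = B₂

theorem IsNoncrossing.restrict {P : Finpartition s} (hP : P.IsNoncrossing) (ht : t ⊆ s) :
    (P.restrict ht).IsNoncrossing := by
  intro A₁ hA₁ A₂ hA₂ i j k l hij hjk hkl hi hk hj hl
  obtain ⟨-, B₁, hB₁, rfl⟩ := (mem_restrict_parts ht).1 hA₁
  obtain ⟨-, B₂, hB₂, rfl⟩ := (mem_restrict_parts ht).1 hA₂
  rw [hP B₁ hB₁ B₂ hB₂ i j k l hij hjk hkl (mem_inter.1 hi).1 (mem_inter.1 hk).1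
    (mem_inter.1 hj).1 (mem_inter.1 hl).1]

theorem IsNoncrossing.disjUnion {P : Finpartition s} {Q : Finpartition t}
    (hP : P.IsNoncrossing) (hQ : Q.IsNoncrossing) (h : Disjoint s t)
    (hst : ∀ x ∈ s, ∀ y ∈ t, x < y) : (P.disjUnion Q h).IsNoncrossing := by
  intro B₁ hB₁ B₂ hB₂ i j k l hij hjk hkl hi hk hj hl
  rcases mem_union.1 hB₁ with hB₁ | hB₁ <;> rcases mem_union.1 hB₂ with hB₂ | hB₂
  · exact hP B₁ hB₁ B₂ hB₂ i j k l hij hjk hkl hi hk hj hl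
  · exact absurd hjk (hst k (P.le hB₁ hk) j (Q.le hB₂ hj)).asymm
  · exact absurd hij (hst j (P.le hB₂ hj) i (Q.le hB₁ hi)).asymm
  · exact hQ B₁ hB₁ B₂ hB₂ i j k l hij hjk hkl hi hk hj hl

theorem isNoncrossing_mapEmb_iff {β : Type*} [Preorder β] [DecidableEq β] (f : α ↪o β)
    (P : Finpartition s) : (P.mapEmb f.toEmbedding).IsNoncrossing ↔ P.IsNoncrossing := by
  constructor
  · intro h B₁ hB₁ B₂ hB₂ i j k l hij hjk hkl hi hk hj hl
    refine map_injective f.toEmbedding (h _ (mem_image_of_mem _ hB₁) _ (mem_image_of_mem _ hB₂)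
      (f i) (f j) (f k) (f l) (f.lt_iff_lt.2 hij) (f.lt_iff_lt.2 hjk) (f.lt_iff_lt.2 hkl)
      ?_ ?_ ?_ ?_)
    all_goals exact mem_map_of_mem _ ‹_›
  · intro h A₁ hA₁ A₂ hA₂ i j k l hij hjk hkl hi hk hj hl
    obtain ⟨B₁, hB₁, rfl⟩ := mem_image.1 hA₁
    obtain ⟨B₂, hB₂, rfl⟩ := mem_image.1 hA₂
    obtain ⟨i', hi', rfl⟩ := mem_map.1 hi
    obtain ⟨k', hk', rfl⟩ := mem_map.1 hk
    obtain ⟨j', hj', rfl⟩ := mem_map.1 hj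
    obtain ⟨l', hl', rfl⟩ := mem_map.1 hl
    rw [h B₁ hB₁ B₂ hB₂ i' j' k' l' (f.lt_iff_lt.1 hij) (f.lt_iff_lt.1 hjk) (f.lt_iff_lt.1 hkl)
      hi' hk' hj' hl']

end Noncrossing

section LinearOrder

variable [LinearOrder α] {s : Finset α} {P : Finpartition s}

theorem IsNoncrossing.insertPart (hP : P.IsNoncrossing) {a x : α} (ha : a ∉ s)
    (hsa : ∀ y ∈ s, y < a) (hxs : ∀ y ∈ s, x ≤ y) : (P.insertPart ha x).IsNoncrossing := by
  intro B₁ hB₁ B₂ hB₂ i j k l hij hjk hkl hi hk hj hl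
  simp only [Finpartition.insertPart, mem_insert, Finset.mem_erase] at hB₁ hB₂
  have hlt : ∀ {B y}, B ∈ P.parts → y ∈ B → y < a := fun hB hy => hsa _ (P.le hB hy)
  have hpart : ∀ {y}, y ∈ insert a (P.part x) → y < a → y ∈ P.part x :=
    fun hy hya => (mem_insert.1 hy).resolve_left hya.ne
  rcases hB₁ with rfl | ⟨hB₁x, hB₁⟩ <;> rcases hB₂ with rfl | ⟨hB₂x, hB₂⟩
  · rfl
  · have hk' := hpart hk (hkl.trans (hlt hB₂ hl))
    have hi' := hpart hi ((hij.trans hjk).trans (hkl.trans (hlt hB₂ hl)))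
    exact absurd (hP _ (part_mem_parts_of_mem hk') _ hB₂ i j k l hij hjk hkl hi' hk' hj hl)
      hB₂x.symm
  · have hj' := hpart hj (hjk.trans (hlt hB₁ hk))
    have hC := part_mem_parts_of_mem hj'
    rcases mem_insert.1 hl with rfl | hl'
    · -- then `x < i < j < k` is a crossing in `P`
      have hxC : x ∈ P.part x := P.mem_part (P.part_nonempty.1 ⟨j, hj'⟩)
      have hxi : x < i := (hxs i (P.le hB₁ hi)).lt_of_ne (by
        rintro rfl
        exact hB₁x (P.eq_of_mem_parts hB₁ hC hi hxC))
      exact absurd (hP _ hC _ hB₁ x i j k hxi hij hjk hxC hj' hi hk) (Ne.symm hB₁x)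
    · exact absurd (hP _ hB₁ _ hC i j k l hij hjk hkl hi hk hj' hl') hB₁x
  · exact hP B₁ hB₁ B₂ hB₂ i j k l hij hjk hkl hi hk hj hl

theorem IsNoncrossing.forall_lt_or_forall_gt (hP : P.IsNoncrossing) {B C : Finset α}
    (hB : B ∈ P.parts) (hC : C ∈ P.parts) (hBC : B ≠ C) {x b : α} (hx : x ∈ C)
    (hxs : ∀ y ∈ s, x ≤ y) (hb : b ∈ C) : (∀ z ∈ B, z < b) ∨ (∀ z ∈ B, b < z) := by
  have hnot : ∀ z ∈ B, z ∉ C := fun z hzB hzC => hBC (P.eq_of_mem_parts hB hC hzB hzC)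
  by_cases h : ∃ y ∈ B, y < b
  · obtain ⟨y, hyB, hyb⟩ := h
    have hxy : x < y := (hxs y (P.le hB hyB)).lt_of_ne (by rintro rfl; exact hnot _ hyB hx)
    refine Or.inl fun z hzB => ?_
    by_contra! hbz
    have hbz' : b < z := hbz.lt_of_ne (by rintro rfl; exact hnot _ hzB hb)
    exact hBC.symm (hP C hC B hB x y b z hxy hyb hbz' hx hb hyB hzB)
  · simp only [not_exists, not_and, not_lt] at h
    exact Or.inr fun z hzB => (h z hzB).lt_of_ne (by rintro rfl; exact hnot _ hzB hb)

end LinearOrder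

end Finpartition

instance Finpartition.instUniqueRangeZero : Unique (Finpartition (range 0)) :=
  inferInstanceAs (Unique (Finpartition (⊥ : Finset ℕ)))

section Sums

variable {R : Type*} [CommSemiring R]

namespace Finpartition

def weight {α : Type*} [DecidableEq α] {s : Finset α} (F : ℕ → R) (P : Finpartition s) : R :=
  ∏ B ∈ P.parts, F #B

def markedWeight {s : Finset ℕ} (F : ℕ → R) (j : ℕ) (P : Finpartition s) : R :=
  F (#(P.part 0) + j) * ∏ B ∈ P.parts.erase (P.part 0), F #B

end Finpartition

open Finpartition

noncomputable def noncrossingSum {α : Type*} [Preorder α] [DecidableEq α] (F : ℕ → R)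
    (s : Finset α) : R :=
  ∑ P : Finpartition s, if P.IsNoncrossing then P.weight F else 0

noncomputable def markedNoncrossingSum (F : ℕ → R) (j k : ℕ) : R :=
  ∑ P : Finpartition (range k), if P.IsNoncrossing then P.markedWeight F j else 0

theorem noncrossingSum_map {α β : Type*} [Preorder α] [DecidableEq α] [Preorder β]
    [DecidableEq β] (F : ℕ → R) (f : α ↪o β) (s : Finset α) :
    noncrossingSum F (s.map f.toEmbedding) = noncrossingSum F s := by
  refine (Fintype.sum_equiv (mapEmbEquiv f.toEmbedding s) _ _ fun P => ?_).symm
  simp only [mapEmbEquiv, Equiv.coe_fn_mk, isNoncrossing_mapEmb_iff]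
  simp only [weight, mapEmb, prod_image fun B _ C _ h => map_injective _ h, card_map]

theorem noncrossingSum_Icc (F : ℕ → R) (b n : ℕ) :
    noncrossingSum F (Icc (b + 1) n) = noncrossingSum F (range (n - b)) := by
  have : (range (n - b)).map (OrderEmbedding.addLeft (b + 1)).toEmbedding = Icc (b + 1) n := by
    ext x
    simp only [OrderEmbedding.addLeft, mem_map, mem_range, RelEmbedding.coe_toEmbedding,
      OrderEmbedding.coe_ofStrictMono, mem_Icc]
    exact ⟨fun ⟨y, hy, hyx⟩ => by omega, fun hx => ⟨x - (b + 1), by omega, by omega⟩⟩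
  rw [← this, noncrossingSum_map]

theorem Finpartition.isNoncrossing_range_zero (P : Finpartition (range 0)) : P.IsNoncrossing :=
  fun B hB => by simp [P.parts_eq_empty_iff.2 rfl] at hB

theorem noncrossingSum_range_zero (F : ℕ → R) : noncrossingSum F (range 0) = 1 := by
  rw [noncrossingSum, Fintype.sum_unique, if_pos (isNoncrossing_range_zero _)]
  rfl

theorem markedNoncrossingSum_zero (F : ℕ → R) (j : ℕ) : markedNoncrossingSum F j 0 = F j := by
  rw [markedNoncrossingSum, Fintype.sum_unique, if_pos (isNoncrossing_range_zero _), markedWeight,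
    (default : Finpartition (range 0)).part_eq_empty.2 notMem_range_self, card_empty, zero_add,
    (default : Finpartition (range 0)).parts_eq_empty_iff.2 rfl, erase_empty, prod_empty, mul_one]

theorem noncrossingSum_range_eq_markedNoncrossingSum (F : ℕ → R) (k : ℕ) :
    noncrossingSum F (range (k + 1)) = markedNoncrossingSum F 0 (k + 1) :=
  sum_congr rfl fun P _ => by
    rw [weight, markedWeight, add_zero,
      ← mul_prod_erase P.parts (fun B => F #B) (P.part_mem.2 (mem_range.2 k.succ_pos))]

end Sums

section Intervals

variable {b n : ℕ}

theorem range_subset_range_succ (hbn : b ≤ n) : range b ⊆ range (n + 1) :=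
  range_subset_range.2 (by omega)

theorem Icc_succ_subset_range_succ : Icc (b + 1) n ⊆ range (n + 1) :=
  fun x hx => by simp only [mem_Icc, mem_range] at hx ⊢; omega

theorem disjoint_insert_range_Icc : Disjoint (insert b (range b)) (Icc (b + 1) n) :=
  disjoint_left.2 fun x hx hx' => by simp only [mem_insert, mem_range, mem_Icc] at hx hx'; omega

theorem insert_inter_range_of_sup_id_eq {C : Finset ℕ} (hC : C.Nonempty)
    (hsup : C.sup id = b) : insert b (C ∩ range b) = C := by
  obtain ⟨c, hc, hcsup⟩ := exists_mem_eq_sup _ hC id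
  have hbC : b ∈ C := by rwa [← hsup, hcsup]
  ext y
  simp only [mem_insert, mem_inter, mem_range]
  constructor
  · rintro (rfl | ⟨hy, -⟩)
    exacts [hbC, hy]
  · intro hy
    exact (hsup ▸ le_sup (f := id) hy : y ≤ b).lt_or_eq.symm.imp id fun h => ⟨hy, h⟩

end Intervals

namespace Finpartition

variable {b n : ℕ}

def glue (hbn : b ≤ n) (P : Finpartition (range b)) (Q : Finpartition (Icc (b + 1) n)) :
    Finpartition (range (n + 1)) :=
  ((P.insertPart notMem_range_self 0).disjUnion Q disjoint_insert_range_Icc).copy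
    (by ext x; simp only [mem_union, mem_insert, mem_range, mem_Icc]; omega)

variable {hbn : b ≤ n} {P : Finpartition (range b)} {Q : Finpartition (Icc (b + 1) n)}

theorem glue_parts : (glue hbn P Q).parts =
    insert (insert b (P.part 0)) (P.parts.erase (P.part 0)) ∪ Q.parts :=
  rfl

theorem glue_part_zero : (glue hbn P Q).part 0 = insert b (P.part 0) := by
  refine part_eq_of_mem _ (by simp [glue_parts]) ?_
  rcases b.eq_zero_or_pos with rfl | hb
  exacts [mem_insert_self _ _, mem_insert_of_mem (P.mem_part (mem_range.2 hb))]

theorem sup_glue_part_zero : ((glue hbn P Q).part 0).sup id = b := by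
  rw [glue_part_zero, sup_insert, id_eq, sup_eq_left]
  exact Finset.sup_le fun y hy => (mem_range.1 (P.part_subset 0 hy)).le

theorem IsNoncrossing.glue (hP : P.IsNoncrossing) (hQ : Q.IsNoncrossing) :
    (glue hbn P Q).IsNoncrossing :=
  (hP.insertPart _ (fun _ hy => mem_range.1 hy) fun y _ => y.zero_le).disjUnion hQ
    disjoint_insert_range_Icc fun x hx y hy => by
      simp only [mem_insert, mem_range, mem_Icc] at hx hy
      omega

theorem restrict_glue_left : (glue hbn P Q).restrict (range_subset_range_succ hbn) = P := by
  refine (eq_of_parts_subset fun A hA => (mem_restrict_parts _).2 ⟨P.ne_empty hA, ?_⟩).symm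
  have hAb : A ∩ range b = A := inter_eq_left.2 (P.le hA)
  by_cases hA0 : A = P.part 0
  · refine ⟨insert b A, by simp [glue_parts, hA0], ?_⟩
    rw [insert_inter_of_notMem notMem_range_self, hAb]
  · exact ⟨A, by simp [glue_parts, hA0, hA], hAb⟩

theorem restrict_glue_right : (glue hbn P Q).restrict Icc_succ_subset_range_succ = Q :=
  (eq_of_parts_subset fun A hA => (mem_restrict_parts _).2
    ⟨Q.ne_empty hA, A, mem_union_right _ hA, inter_eq_left.2 (Q.le hA)⟩).symm

theorem markedWeight_glue {R : Type*} [CommSemiring R] (F : ℕ → R) (j : ℕ) :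
    (glue hbn P Q).markedWeight F j = P.markedWeight F (j + 1) * Q.weight F := by
  have hb : b ∉ P.part 0 := fun h => notMem_range_self (P.part_subset 0 h)
  have hnot : insert b (P.part 0) ∉ P.parts.erase (P.part 0) ∪ Q.parts := by
    rw [mem_union, not_or]
    refine ⟨fun h => notMem_range_self (P.le (mem_of_mem_erase h) (mem_insert_self _ _)),
      fun h => ?_⟩
    have := mem_Icc.1 (Q.le h (mem_insert_self _ _))
    omega
  rw [markedWeight, markedWeight, weight, glue_part_zero, card_insert_of_notMem hb, glue_parts,
    insert_union, erase_insert hnot,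
    prod_union ((disjoint_parts P Q (disjoint_insert_range_Icc.mono_left
      (subset_insert _ _))).mono_left (erase_subset _ _)), ← mul_assoc, add_right_comm, add_assoc]

theorem part_zero_restrict_range (π : Finpartition (range (n + 1))) (hbn : b ≤ n) :
    (π.restrict (range_subset_range_succ hbn)).part 0 = π.part 0 ∩ range b := by
  rcases b.eq_zero_or_pos with rfl | hb
  · rw [(π.restrict _).part_eq_empty.2 notMem_range_self]
    simp
  · exact part_restrict _ (mem_range.2 hb)

theorem glue_restrict {π : Finpartition (range (n + 1))} (hπ : π.IsNoncrossing) (hbn : b ≤ n)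
    (hsup : (π.part 0).sup id = b) :
    glue hbn (π.restrict (range_subset_range_succ hbn)) (π.restrict Icc_succ_subset_range_succ)
      = π := by
  have h0 : 0 ∈ range (n + 1) := mem_range.2 n.succ_pos
  have hC := π.part_mem.2 h0
  have hins := insert_inter_range_of_sup_id_eq ⟨0, π.mem_part h0⟩ hsup
  have hbC : b ∈ π.part 0 := hins ▸ mem_insert_self _ _
  refine (eq_of_parts_subset fun B hB => ?_).symm
  rw [glue_parts, part_zero_restrict_range π hbn, hins, mem_union, mem_insert, Finset.mem_erase]
  by_cases hB0 : B = π.part 0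
  · exact Or.inl (Or.inl hB0)
  rcases hπ.forall_lt_or_forall_gt hB hC hB0 (π.mem_part h0) (fun y _ => y.zero_le) hbC
    with h | h
  · refine Or.inl (Or.inr ⟨fun hB0' => hB0 ?_, (mem_restrict_parts _).2
      ⟨π.ne_empty hB, B, hB, inter_eq_left.2 fun z hz => mem_range.2 (h z hz)⟩⟩)
    obtain ⟨z, hz⟩ := π.nonempty_of_mem_parts hB
    exact π.eq_of_mem_parts hB hC hz (mem_inter.1 (hB0' ▸ hz)).1
  · exact Or.inr ((mem_restrict_parts _).2 ⟨π.ne_empty hB, B, hB, inter_eq_left.2 fun z hz =>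
      mem_Icc.2 ⟨h z hz, Nat.lt_succ_iff.1 (mem_range.1 (π.le hB hz))⟩⟩)

end Finpartition

section Recursion

variable {R : Type*} [CommSemiring R]

open Finpartition

theorem sum_markedWeight_filter_sup_eq (F : ℕ → R) (j : ℕ) {b n : ℕ} (hbn : b ≤ n) :
    ∑ π : Finpartition (range (n + 1)) with π.IsNoncrossing ∧ (π.part 0).sup id = b,
        π.markedWeight F j =
      markedNoncrossingSum F (j + 1) b * noncrossingSum F (Icc (b + 1) n) := by
  rw [markedNoncrossingSum, noncrossingSum, ← sum_filter, ← sum_filter, sum_mul_sum,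
    ← sum_product']
  symm
  refine sum_nbij' (fun p => glue hbn p.1 p.2)
    (fun π => (π.restrict (range_subset_range_succ hbn), π.restrict Icc_succ_subset_range_succ))
    ?_ ?_ ?_ ?_ ?_
  · rintro ⟨P, Q⟩ h
    simp only [mem_product, mem_filter, mem_univ, true_and] at h ⊢
    exact ⟨h.1.glue h.2, sup_glue_part_zero⟩
  · intro π h
    simp only [mem_product, mem_filter, mem_univ, true_and] at h ⊢
    exact ⟨h.1.restrict _, h.1.restrict _⟩
  · rintro ⟨P, Q⟩ -
    rw [restrict_glue_left, restrict_glue_right]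
  · intro π h
    simp only [mem_filter, mem_univ, true_and] at h
    exact glue_restrict h.1 hbn h.2
  · rintro ⟨P, Q⟩ -
    exact (markedWeight_glue F j).symm

theorem markedNoncrossingSum_succ (F : ℕ → R) (j n : ℕ) :
    markedNoncrossingSum F j (n + 1) = ∑ b ∈ range (n + 1),
      markedNoncrossingSum F (j + 1) b * noncrossingSum F (range (n - b)) := by
  have hsup : ∀ π ∈ (univ : Finset (Finpartition (range (n + 1)))).filter IsNoncrossing,
      (π.part 0).sup id ∈ range (n + 1) := fun π _ =>
    mem_range.2 ((Finset.sup_lt_iff n.succ_pos).2 fun y hy => mem_range.1 (π.part_subset 0 hy))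
  rw [markedNoncrossingSum, ← sum_filter, ← sum_fiberwise_of_maps_to hsup]
  refine sum_congr rfl fun b hb => ?_
  rw [filter_filter, sum_markedWeight_filter_sup_eq F j (Nat.lt_succ_iff.1 (mem_range.1 hb)),
    noncrossingSum_Icc]

end Recursion

section PowerSeriesIdentity

variable {R : Type*} [CommRing R]

theorem subst_mk_shift {a : R⟦X⟧} (ha : HasSubst a) (F : ℕ → R) (j : ℕ) :
    (PowerSeries.mk fun k => F (j + k)).subst a =
      C (F j) + a * (PowerSeries.mk fun k => F (j + 1 + k)).subst a := by
  have : (PowerSeries.mk fun k => F (j + k)) =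
      C (F j) + X * PowerSeries.mk fun k => F (j + 1 + k) := by
    ext (_ | k)
    · simp
    · simp [coeff_succ_X_mul, add_assoc, add_comm 1 k]
  rw [this, subst_add ha, subst_mul ha, subst_C, subst_X ha]
  rfl

theorem markedNoncrossingSum_eq_coeff_subst (F : ℕ → R) (j n : ℕ) :
    markedNoncrossingSum F j n = coeff n ((PowerSeries.mk fun k => F (j + k)).subst
      (X * PowerSeries.mk fun k => noncrossingSum F (range k))) := by
  have ha : HasSubst (X * PowerSeries.mk fun k => noncrossingSum F (range k)) :=
    HasSubst.of_constantCoeff_zero' (by simp)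
  induction n using Nat.strong_induction_on generalizing j with
  | _ n ih =>
  rw [subst_mk_shift ha, map_add, coeff_C]
  rcases n with _ | n
  · simp [markedNoncrossingSum_zero]
  · rw [markedNoncrossingSum_succ, if_neg n.succ_ne_zero, zero_add, mul_assoc, coeff_succ_X_mul,
      mul_comm, coeff_mul, Nat.sum_antidiagonal_eq_sum_range_succ
        (fun b c => coeff b _ * coeff c _)]
    exact sum_congr rfl fun b hb => by rw [ih b (mem_range.1 hb) (j + 1), coeff_mk]

theorem mk_noncrossingSum_eq_subst {F : ℕ → R} (hF : F 0 = 1) :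
    (PowerSeries.mk fun k => noncrossingSum F (range k)) =
      (PowerSeries.mk F).subst (X * PowerSeries.mk fun k => noncrossingSum F (range k)) := by
  ext (_ | k)
  · rw [coeff_mk, noncrossingSum_range_zero, ← hF, ← markedNoncrossingSum_zero F 0,
      markedNoncrossingSum_eq_coeff_subst]
    simp
  · rw [coeff_mk, noncrossingSum_range_eq_markedNoncrossingSum,
      markedNoncrossingSum_eq_coeff_subst]
    simp

theorem coeff_X_mul_pow_congr {f g : R⟦X⟧} {N : ℕ} (h : ∀ i < N, coeff i f = coeff i g)
    (k : ℕ) : coeff N ((X * f) ^ k) = coeff N ((X * g) ^ k) := by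
  have hfg : X ^ (N + 1) ∣ X * f - X * g := by
    rw [← mul_sub, _root_.pow_succ']
    exact mul_dvd_mul_left X (X_pow_dvd_iff.2 fun i hi => by rw [map_sub, h i hi, sub_self])
  rw [← sub_eq_zero, ← map_sub]
  exact X_pow_dvd_iff.1 (hfg.trans (sub_dvd_pow_sub_pow _ _ k)) N N.lt_succ_self

end PowerSeriesIdentity

theorem psComp_eq_subst (R f : ℚ⟦X⟧) (hf : constantCoeff f = 0) : psComp R f = R.subst f := by
  ext n
  rw [psComp, coeff_mk, coeff_subst' (HasSubst.of_constantCoeff_zero' hf),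
    finsum_eq_sum_of_support_subset _ (s := range (n + 1)) fun d hd => ?_]
  · simp only [smul_eq_mul]
  · rw [coe_range, Set.mem_Iio, Nat.lt_succ_iff]
    by_contra! hnd
    refine hd ?_
    simp only
    rw [X_pow_dvd_iff.1 (pow_dvd_pow_of_dvd (X_dvd_iff.2 hf) d) n hnd, smul_zero]

theorem eq_of_eq_psComp_X_mul {r m m' : ℕ → ℚ}
    (hm : PowerSeries.mk m = psComp (PowerSeries.mk r) (X * PowerSeries.mk m))
    (hm' : PowerSeries.mk m' = psComp (PowerSeries.mk r) (X * PowerSeries.mk m')) : m = m' := by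
  funext N
  induction N using Nat.strong_induction_on with
  | _ N ih =>
  have hcoeff (s : ℕ → ℚ)
      (hs : PowerSeries.mk s = psComp (PowerSeries.mk r) (X * PowerSeries.mk s)) :
      s N = ∑ k ∈ range (N + 1), r k * coeff N ((X * PowerSeries.mk s) ^ k) := by
    simpa only [psComp, coeff_mk] using congrArg (coeff N) hs
  rw [hcoeff m hm, hcoeff m' hm']
  exact sum_congr rfl fun k _ => by
    rw [coeff_X_mul_pow_congr (g := PowerSeries.mk m') (fun i hi => by simp [ih i hi]) k]

theorem stmt18_general (m r : ℕ → ℚ) (hr0 : r 0 = 1)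
    (hrel : PowerSeries.mk m = psComp (PowerSeries.mk r) (X * PowerSeries.mk m)) :
    ∀ n : ℕ, 1 ≤ n →
      m n = ∑ π : Finpartition (Finset.univ : Finset (Fin n)),
        if Noncrossing π then ∏ B ∈ π.parts, r B.card else 0 := by
  have hS := mk_noncrossingSum_eq_subst hr0
  rw [← psComp_eq_subst _ _ (by simp)] at hS
  obtain rfl : m = fun k => noncrossingSum r (range k) := eq_of_eq_psComp_X_mul hrel hS
  intro n _
  show noncrossingSum r (range n) = _
  rw [← Nat.Iio_eq_range, ← Fin.map_valEmbedding_univ]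
  exact noncrossingSum_map r (Fin.valOrderEmb n) univ

/-- if `M(t) = R(tM(t))`, then Speicher's free moment-cumulant relation
holds: `m_n = Σ_{π noncrossing partition of {1,…,n}} ∏_{B ∈ π} r_{|B|}`. -/
theorem stmt18 (m r : ℕ → ℚ) (hm0 : m 0 = 1) (hr0 : r 0 = 1)
    (hrel : PowerSeries.mk m = psComp (PowerSeries.mk r) (X * PowerSeries.mk m)) :
    ∀ n : ℕ, 1 ≤ n →
      m n = ∑ π : Finpartition (Finset.univ : Finset (Fin n)),
        if Noncrossing π then ∏ B ∈ π.parts, r B.card else 0 :=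
  stmt18_general m r hr0 hrel
end

section
/- For every positive integer i and every element d of a commutative ℚ-algebra, Σ_{μ ⊢ i} (d)_{ν_μ − 1} d_μ = (1 + d)^{i−1}, where (d)_j = d(d−1)⋯(d−j+1), ν_μ is the number of parts of μ, and d_μ = i!/(∏_j r_j!(j!)^{r_j}) with r_j the number of parts of μ equal to j. -/
open Finset Nat

/-- `d_μ = i!/(∏_j r_j! (j!)^{r_j})` for a partition `μ` of `i`. -/
noncomputable def dCoeff {i : ℕ} (mu : i.Partition) : ℚ :=
  (i ! : ℚ) /
    ((∏ j ∈ mu.parts.toFinset, ((mu.parts.count j)! : ℚ)) *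
      (mu.parts.map fun j => ((j ! : ℚ))).prod)

namespace Stmt19

/-- Erase one copy of a part `a` from a partition of `m`, giving a partition of `m - a`. -/
def erasePart {m : ℕ} (mu : m.Partition) (a : ℕ) (ha : a ∈ mu.parts) : (m - a).Partition where
  parts := mu.parts.erase a
  parts_pos := fun hi => mu.parts_pos (Multiset.mem_of_mem_erase hi)
  parts_sum := by
    have h : a + (mu.parts.erase a).sum = m := by
      rw [← Multiset.sum_cons, Multiset.cons_erase ha, mu.parts_sum]
    omega

/-- Insert a part `a` into a partition of `m - a`, giving a partition of `m`. -/
def insertPart {m : ℕ} (a : ℕ) (ha : 1 ≤ a) (hm : a ≤ m) (la : (m - a).Partition) :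
    m.Partition where
  parts := a ::ₘ la.parts
  parts_pos := fun {i} hi => by
    rcases Multiset.mem_cons.mp hi with h | h
    · subst h; omega
    · exact la.parts_pos h
  parts_sum := by rw [Multiset.sum_cons, la.parts_sum]; omega

lemma P1_pos {m : ℕ} (mu : m.Partition) :
    (0 : ℚ) < ∏ j ∈ mu.parts.toFinset, ((mu.parts.count j)! : ℚ) :=
  Finset.prod_pos fun j _ => by positivity

lemma P2_pos {m : ℕ} (mu : m.Partition) :
    (0 : ℚ) < (mu.parts.map fun j => ((j ! : ℚ))).prod := by
  apply Multiset.prod_pos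
  intro x hx
  obtain ⟨j, _, rfl⟩ := Multiset.mem_map.mp hx
  positivity

lemma key {m a : ℕ} (mu : m.Partition) (ha : a ∈ mu.parts) :
    (a : ℚ) * (mu.parts.count a) * dCoeff mu
      = m * ((m - 1).choose (a - 1)) * dCoeff (erasePart mu a ha) := by
  have ha1 : 1 ≤ a := mu.parts_pos ha
  have ham : a ≤ m := by
    have h := Multiset.le_sum_of_mem ha
    rwa [mu.parts_sum] at h
  have hm1 : 1 ≤ m := le_trans ha1 ham
  have hc1 : 1 ≤ mu.parts.count a := Multiset.one_le_count_iff_mem.mpr ha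
  set ν := mu.parts.erase a with hν
  have hP2 : (mu.parts.map fun j => ((j ! : ℚ))).prod
      = (a ! : ℚ) * (ν.map fun j => ((j ! : ℚ))).prod := by
    conv_lhs => rw [← Multiset.cons_erase ha]
    rw [Multiset.map_cons, Multiset.prod_cons]
  have hν' : (∏ j ∈ ν.toFinset, ((ν.count j)! : ℚ))
      = ∏ j ∈ mu.parts.toFinset, ((ν.count j)! : ℚ) := by
    apply Finset.prod_subset
    · intro x hx
      rw [Multiset.mem_toFinset] at *
      exact Multiset.mem_of_mem_erase hx
    · intro x _ hnx
      rw [Multiset.mem_toFinset] at hnx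
      rw [Multiset.count_eq_zero.mpr hnx]
      simp
  have hcfac : ((mu.parts.count a)! : ℚ)
      = (mu.parts.count a) * ((mu.parts.count a - 1)! : ℚ) := by
    obtain ⟨c, hc⟩ : ∃ c, mu.parts.count a = c + 1 := ⟨mu.parts.count a - 1, by omega⟩
    rw [hc]
    push_cast [Nat.factorial_succ]
    simp
  have hP1 : (∏ j ∈ mu.parts.toFinset, ((mu.parts.count j)! : ℚ))
      = (mu.parts.count a) * ∏ j ∈ ν.toFinset, ((ν.count j)! : ℚ) := by
    rw [hν']
    have haT : a ∈ mu.parts.toFinset := Multiset.mem_toFinset.mpr ha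
    rw [← Finset.mul_prod_erase _ _ haT,
        ← Finset.mul_prod_erase _ (fun j => ((ν.count j)! : ℚ)) haT]
    have h1 : ν.count a = mu.parts.count a - 1 := Multiset.count_erase_self a mu.parts
    have h2 : ∀ x ∈ (mu.parts.toFinset).erase a, ((ν.count x)! : ℚ) = ((mu.parts.count x)! : ℚ) := by
      intro x hx
      rw [hν, Multiset.count_erase_of_ne (Finset.ne_of_mem_erase hx)]
    rw [Finset.prod_congr rfl h2, h1, hcfac]
    ring
  have hch : (((m - 1).choose (a - 1) : ℕ) : ℚ) * ((a - 1)! : ℚ) * ((m - a)! : ℚ)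
      = ((m - 1)! : ℚ) := by
    have h := Nat.choose_mul_factorial_mul_factorial (show a - 1 ≤ m - 1 by omega)
    have h' : (m - 1) - (a - 1) = m - a := by omega
    rw [h'] at h
    exact_mod_cast congrArg (fun x : ℕ => (x : ℚ)) h
  have hmfac : (m ! : ℚ) = m * ((m - 1)! : ℚ) := by
    obtain ⟨c, hc⟩ : ∃ c, m = c + 1 := ⟨m - 1, by omega⟩
    rw [hc]
    push_cast [Nat.factorial_succ]
    simp
  have hafac : (a ! : ℚ) = a * ((a - 1)! : ℚ) := by
    obtain ⟨c, hc⟩ : ∃ c, a = c + 1 := ⟨a - 1, by omega⟩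
    rw [hc]
    push_cast [Nat.factorial_succ]
    simp
  have hE : (erasePart mu a ha).parts = ν := rfl
  rw [dCoeff, dCoeff, hE]
  have hB : ((∏ j ∈ mu.parts.toFinset, ((mu.parts.count j)! : ℚ)) *
      (mu.parts.map fun j => ((j ! : ℚ))).prod) ≠ 0 :=
    ne_of_gt (mul_pos (P1_pos mu) (P2_pos mu))
  have hD : ((∏ j ∈ ν.toFinset, ((ν.count j)! : ℚ)) *
      (ν.map fun j => ((j ! : ℚ))).prod) ≠ 0 := by
    have := mul_pos (P1_pos (erasePart mu a ha)) (P2_pos (erasePart mu a ha))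
    rw [hE] at this
    exact ne_of_gt this
  rw [← mul_div_assoc, ← mul_div_assoc, div_eq_div_iff hB hD]
  rw [hP1, hP2, hmfac, ← hch, hafac]
  ring


lemma main : ∀ m : ℕ, ∀ y : ℚ,
    ∑ mu : m.Partition, (descPochhammer ℚ mu.parts.card).eval y * dCoeff mu = y ^ m := by
  intro m
  induction m using Nat.strong_induction_on with
  | _ m ih =>
  intro y
  rcases m with _ | n
  · simp [dCoeff]
  · -- basic facts
    have hcard : ∀ mu : (n + 1).Partition, 1 ≤ mu.parts.card := by
      intro mu
      have h : mu.parts ≠ 0 := by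
        intro h
        have := mu.parts_sum
        rw [h] at this
        simp at this
      exact Multiset.card_pos.mpr h
    have step1 : ∀ mu : (n + 1).Partition,
        (descPochhammer ℚ mu.parts.card).eval y
          = y * (descPochhammer ℚ (mu.parts.card - 1)).eval (y - 1) := by
      intro mu
      conv_lhs => rw [show mu.parts.card = (mu.parts.card - 1) + 1 by have := hcard mu; omega]
      rw [descPochhammer_succ_left, Polynomial.eval_mul, Polynomial.eval_X, Polynomial.eval_comp,
        Polynomial.eval_sub, Polynomial.eval_X, Polynomial.eval_one]
    have e1 : (∑ mu : (n + 1).Partition, (descPochhammer ℚ mu.parts.card).eval y * dCoeff mu)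
        = y * ∑ mu : (n + 1).Partition,
            (descPochhammer ℚ (mu.parts.card - 1)).eval (y - 1) * dCoeff mu := by
      rw [Finset.mul_sum]
      exact Finset.sum_congr rfl fun mu _ => by rw [step1 mu]; ring
    rw [e1]
    suffices hT : (∑ mu : (n + 1).Partition,
        (descPochhammer ℚ (mu.parts.card - 1)).eval (y - 1) * dCoeff mu) = y ^ n by
      rw [hT]; ring
    have hne : ((n : ℚ) + 1) ≠ 0 := by positivity
    apply mul_left_cancel₀ hne
    rw [Finset.mul_sum]
    -- expand (n+1) as sum over parts
    have e2 : ∀ mu : (n + 1).Partition,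
        ((n : ℚ) + 1) * ((descPochhammer ℚ (mu.parts.card - 1)).eval (y - 1) * dCoeff mu)
          = ∑ a ∈ mu.parts.toFinset,
              ((a : ℚ) * (mu.parts.count a)) *
                ((descPochhammer ℚ (mu.parts.card - 1)).eval (y - 1) * dCoeff mu) := by
      intro mu
      rw [← Finset.sum_mul]
      congr 1
      have h1 : mu.parts.sum = ∑ a ∈ mu.parts.toFinset, mu.parts.count a * a := by
        conv_lhs => rw [← Multiset.map_id mu.parts]
        rw [Finset.sum_multiset_map_count]
        simp [smul_eq_mul]
      have h2 : ((n : ℚ) + 1) = ((mu.parts.sum : ℕ) : ℚ) := by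
        rw [mu.parts_sum]; push_cast; ring
      rw [h2, h1]
      push_cast
      exact Finset.sum_congr rfl fun a _ => by ring
    calc (∑ mu : (n + 1).Partition,
          ((n : ℚ) + 1) * ((descPochhammer ℚ (mu.parts.card - 1)).eval (y - 1) * dCoeff mu))
        = ∑ mu : (n + 1).Partition, ∑ a ∈ mu.parts.toFinset,
            ((a : ℚ) * (mu.parts.count a)) *
              ((descPochhammer ℚ (mu.parts.card - 1)).eval (y - 1) * dCoeff mu) :=
          Finset.sum_congr rfl fun mu _ => e2 mu
      _ = ∑ a ∈ Finset.Icc 1 (n + 1), ∑ mu ∈ Finset.univ.filter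
            (fun mu : (n + 1).Partition => a ∈ mu.parts),
            ((a : ℚ) * (mu.parts.count a)) *
              ((descPochhammer ℚ (mu.parts.card - 1)).eval (y - 1) * dCoeff mu) := by
          apply Finset.sum_comm'
          intro mu a
          simp only [Finset.mem_univ, true_and, Multiset.mem_toFinset, Finset.mem_filter,
            Finset.mem_Icc]
          constructor
          · intro h
            refine ⟨h, mu.parts_pos h, ?_⟩
            have := Multiset.le_sum_of_mem h
            rwa [mu.parts_sum] at this
          · tauto
      _ = ∑ a ∈ Finset.Icc 1 (n + 1), (((n : ℚ) + 1) * (n.choose (a - 1))) * (y - 1) ^ (n + 1 - a) := by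
          apply Finset.sum_congr rfl
          intro a haI
          rw [Finset.mem_Icc] at haI
          have ha1 : 1 ≤ a := haI.1
          have han : a ≤ n + 1 := haI.2
          rw [Finset.sum_bij' (i := fun mu hmu => erasePart mu a (Finset.mem_filter.mp hmu).2)
            (j := fun (la : (n + 1 - a).Partition) (_ : la ∈ Finset.univ) => insertPart a ha1 han la)
            (g := fun la : (n + 1 - a).Partition => (((n : ℚ) + 1) * (n.choose (a - 1))) *
                ((descPochhammer ℚ la.parts.card).eval (y - 1) * dCoeff la))
            (fun _ _ => Finset.mem_univ _)
            (fun la _ => Finset.mem_filter.mpr ⟨Finset.mem_univ _, Multiset.mem_cons_self a _⟩)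
            (fun mu hmu => Nat.Partition.ext (Multiset.cons_erase (Finset.mem_filter.mp hmu).2))
            (fun la _ => Nat.Partition.ext (Multiset.erase_cons_head a _))
            (fun mu hmu => ?_)]
          · rw [← Finset.mul_sum, ih (n + 1 - a) (by omega) (y - 1)]
          · -- value equality: f mu = g (erasePart mu a _)
            have hamem : a ∈ mu.parts := (Finset.mem_filter.mp hmu).2
            have hkey := key mu hamem
            have hcardE : (erasePart mu a hamem).parts.card = mu.parts.card - 1 :=
              Multiset.card_erase_of_mem hamem
            have hch : (n + 1 - 1).choose (a - 1) = n.choose (a - 1) := by norm_num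
            have hn1 : ((n : ℚ) + 1) = ((n + 1 : ℕ) : ℚ) := by push_cast; ring
            rw [hcardE, hn1]
            calc ((a : ℚ) * (mu.parts.count a)) *
                  ((descPochhammer ℚ (mu.parts.card - 1)).eval (y - 1) * dCoeff mu)
                = ((a : ℚ) * (mu.parts.count a) * dCoeff mu) *
                    (descPochhammer ℚ (mu.parts.card - 1)).eval (y - 1) := by ring
              _ = (((n + 1 : ℕ) : ℚ) * (((n + 1 - 1).choose (a - 1) : ℕ) : ℚ) *
                    dCoeff (erasePart mu a hamem)) *
                    (descPochhammer ℚ (mu.parts.card - 1)).eval (y - 1) := by rw [hkey]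
              _ = _ := by rw [hch]; ring
      _ = ((n : ℚ) + 1) * ∑ a ∈ Finset.Icc 1 (n + 1),
            ((n.choose (a - 1) : ℕ) : ℚ) * (y - 1) ^ (n + 1 - a) := by
          rw [Finset.mul_sum]
          exact Finset.sum_congr rfl fun a _ => by ring
      _ = ((n : ℚ) + 1) * y ^ n := by
          congr 1
          rw [Finset.sum_bij' (i := fun (a : ℕ) (_ : a ∈ Finset.Icc 1 (n + 1)) => a - 1)
            (j := fun (b : ℕ) (_ : b ∈ Finset.range (n + 1)) => b + 1)
            (g := fun b : ℕ => ((n.choose b : ℕ) : ℚ) * (y - 1) ^ (n - b))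
            (fun a ha => by rw [Finset.mem_Icc] at ha; show a - 1 ∈ Finset.range (n + 1); rw [Finset.mem_range]; omega)
            (fun b hb => by rw [Finset.mem_range] at hb; show b + 1 ∈ Finset.Icc 1 (n + 1); rw [Finset.mem_Icc]; omega)
            (fun a ha => by rw [Finset.mem_Icc] at ha; show a - 1 + 1 = a; omega)
            (fun b hb => by show b + 1 - 1 = b; omega)
            (fun a ha => by
              rw [Finset.mem_Icc] at ha
              show _ = ((n.choose (a-1) : ℕ) : ℚ) * (y - 1) ^ (n - (a - 1))
              have h3 : n + 1 - a = n - (a - 1) := by omega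
              rw [h3])]
          have hrefl := Finset.sum_range_reflect
            (fun b => ((n.choose b : ℕ) : ℚ) * (y - 1) ^ (n - b)) (n + 1)
          rw [← hrefl]
          have hco : ∀ j ∈ Finset.range (n + 1),
              ((n.choose (n + 1 - 1 - j) : ℕ) : ℚ) * (y - 1) ^ (n - (n + 1 - 1 - j))
                = (y - 1) ^ j * 1 ^ (n - j) * ((n.choose j : ℕ) : ℚ) := by
            intro j hj
            rw [Finset.mem_range] at hj
            have h1 : n + 1 - 1 - j = n - j := by omega
            have h2 : n - (n - j) = j := by omega
            rw [h1, h2, Nat.choose_symm (by omega)]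
            ring
          rw [Finset.sum_congr rfl hco, ← add_pow]
          norm_num


lemma polyQ (m : ℕ) :
    (∑ mu : m.Partition, descPochhammer ℚ mu.parts.card * Polynomial.C (dCoeff mu))
      = Polynomial.X ^ m := by
  apply Polynomial.funext
  intro y
  rw [Polynomial.eval_finset_sum]
  simp only [Polynomial.eval_mul, Polynomial.eval_C, Polynomial.eval_pow, Polynomial.eval_X]
  exact main m y

lemma polyP (m : ℕ) (hm : 1 ≤ m) :
    (∑ mu : m.Partition, descPochhammer ℚ (mu.parts.card - 1) * Polynomial.C (dCoeff mu))
      = (1 + Polynomial.X) ^ (m - 1) := by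
  have hX : (1 + Polynomial.X : Polynomial ℚ) ≠ 0 := by
    intro h
    have h0 := congrArg (Polynomial.eval 0) h
    simp at h0
  have hcard : ∀ mu : m.Partition, 1 ≤ mu.parts.card := by
    intro mu
    have h : mu.parts ≠ 0 := by
      intro h
      have hs := mu.parts_sum
      rw [h] at hs
      simp at hs
      omega
    exact Multiset.card_pos.mpr h
  apply mul_left_cancel₀ hX
  calc (1 + Polynomial.X) *
        ∑ mu : m.Partition, descPochhammer ℚ (mu.parts.card - 1) * Polynomial.C (dCoeff mu)
      = ∑ mu : m.Partition,
          (descPochhammer ℚ mu.parts.card * Polynomial.C (dCoeff mu)).comp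
            (1 + Polynomial.X) := by
        rw [Finset.mul_sum]
        apply Finset.sum_congr rfl
        intro mu _
        rw [Polynomial.mul_comp, Polynomial.C_comp]
        conv_rhs => rw [show mu.parts.card = (mu.parts.card - 1) + 1 by have := hcard mu; omega]
        rw [descPochhammer_succ_left, Polynomial.mul_comp, Polynomial.X_comp,
          Polynomial.comp_assoc, Polynomial.sub_comp, Polynomial.X_comp, Polynomial.one_comp]
        rw [show (1 + Polynomial.X - 1 : Polynomial ℚ) = Polynomial.X by ring, Polynomial.comp_X]
        ring
    _ = (∑ mu : m.Partition,
          descPochhammer ℚ mu.parts.card * Polynomial.C (dCoeff mu)).comp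
            (1 + Polynomial.X) := by rw [Polynomial.sum_comp]
    _ = (Polynomial.X ^ m).comp (1 + Polynomial.X) := by rw [polyQ]
    _ = (1 + Polynomial.X) ^ m := Polynomial.X_pow_comp
    _ = (1 + Polynomial.X) * (1 + Polynomial.X) ^ (m - 1) := by
        conv_lhs => rw [show m = (m - 1) + 1 by omega]
        rw [pow_succ]
        ring

end Stmt19

/-- for every positive integer `i` and every element `d` of a commutative
ℚ-algebra, `Σ_{μ ⊢ i} (d)_{ν_μ − 1} d_μ = (1 + d)^{i−1}`, where `(d)_j` is the falling
factorial. -/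
theorem stmt19 (A : Type*) [CommRing A] [Algebra ℚ A] (d : A) (i : ℕ) (hi : 1 ≤ i) :
    ∑ mu : i.Partition,
      (descPochhammer A (mu.parts.card - 1)).eval d * algebraMap ℚ A (dCoeff mu) =
      (1 + d) ^ (i - 1) := by
  have hp := Stmt19.polyP i hi
  have h2 := congrArg (Polynomial.aeval d) hp
  rw [map_sum] at h2
  simp only [map_mul, map_pow, map_add, map_one, Polynomial.aeval_X, Polynomial.aeval_C] at h2
  have hdp : ∀ k, Polynomial.aeval d (descPochhammer ℚ k) = (descPochhammer A k).eval d := by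
    intro k
    rw [Polynomial.aeval_def, Polynomial.eval₂_eq_eval_map, descPochhammer_map]
  simp only [hdp] at h2
  exact h2
end
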